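/- The pentagon P with vertices (−1,2), (1,2), (1,0), (−1,−1), (−2,−1) is an LDP-polygon, and its index (the least positive integer ℓ such that ℓP* is a lattice polygon) equals 10. -/

import Mathlib

open Pointwise

/-- The embedding `ℤ² → ℝ²`. -/
def i2r (v : ℤ × ℤ) : ℝ × ℝ := ((v.1 : ℝ), (v.2 : ℝ))

/-- The points of `ℝ × ℝ` with integer coordinates. -/
def latticePts : Set (ℝ × ℝ) := Set.range i2r

/-- The dual polygon `P* = {v | ⟨v,u⟩ ≥ -1 for all u ∈ P}`. -/
def dualPoly (P : Set (ℝ × ℝ)) : Set (ℝ × ℝ) :=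
  {v | ∀ u ∈ P, v.1 * u.1 + v.2 * u.2 ≥ -1}

/-!
The dual of `P` is the pentagon `Q` with vertices `(3/5,-1/5), (0,1), (-1,2), (-1,0), (0,-1/2)`,
and `Q* ⊆ P`. Both inclusions `P* ⊆ Q` and `Q* ⊆ P` are proved cone by cone: the rays through
the vertices of a polygon around the origin cut the plane into cones, and in the cone over an
edge `pq` a point `v` equals `(v × q) / (p × q) • p + (p × v) / (p × q) • q`, a combination
with nonnegative coefficients of sum at most `1` when `v` lies on the inner side of that edge.
Since `Q` is bounded, `0` is interior to `Q* ⊆ P`. The vertices of `10 Q` are integral, while the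
exposed points `ℓ • (0,-1/2)` and `ℓ • (3/5,-1/5)` of `ℓ P*` are integral only if `2 ∣ ℓ` and
`5 ∣ ℓ`.
-/

theorem convex_dualPoly (P : Set (ℝ × ℝ)) : Convex ℝ (dualPoly P) := by
  intro x hx y hy a b ha hb hab u hu
  calc (a • x + b • y).1 * u.1 + (a • x + b • y).2 * u.2
      = a * (x.1 * u.1 + x.2 * u.2) + b * (y.1 * u.1 + y.2 * u.2) := by
        simp only [Prod.fst_add, Prod.snd_add, Prod.smul_fst, Prod.smul_snd, smul_eq_mul]; ring
    _ ≥ a * -1 + b * -1 := by gcongr <;> [exact hx u hu; exact hy u hu]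
    _ = -1 := by linear_combination -hab

theorem subset_dualPoly_dualPoly (s : Set (ℝ × ℝ)) : s ⊆ dualPoly (dualPoly s) :=
  fun u hu v hv => by simpa only [mul_comm] using hv u hu

theorem dualPoly_antitone {s t : Set (ℝ × ℝ)} (h : s ⊆ t) : dualPoly t ⊆ dualPoly s :=
  fun _ hv u hu => hv u (h hu)

theorem dualPoly_convexHull (s : Set (ℝ × ℝ)) : dualPoly (convexHull ℝ s) = dualPoly s := by
  refine (dualPoly_antitone (subset_convexHull ℝ s)).antisymm fun v hv u hu => ?_
  have := convexHull_min (subset_dualPoly_dualPoly s) (convex_dualPoly _) hu v hv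
  simpa only [mul_comm] using this

theorem zero_mem_interior_dualPoly {s : Set (ℝ × ℝ)} {R : ℝ} (hR : 0 < R)
    (hs : ∀ q ∈ s, ‖q‖ ≤ R) : (0 : ℝ × ℝ) ∈ interior (dualPoly s) := by
  refine mem_interior_iff_mem_nhds.mpr (Metric.mem_nhds_iff.mpr
    ⟨1 / (2 * R), by positivity, fun v hv q hq => ?_⟩)
  rw [mem_ball_zero_iff, lt_div_iff₀ (by positivity)] at hv
  have hcoord : ∀ x y : ℝ, ‖x‖ ≤ ‖v‖ → ‖y‖ ≤ R → |x * y| ≤ ‖v‖ * R := fun x y hx hy => by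
    rw [abs_mul]; exact mul_le_mul hx hy (abs_nonneg _) (norm_nonneg _)
  have h1 := hcoord v.1 q.1 (norm_fst_le v) ((norm_fst_le q).trans (hs q hq))
  have h2 := hcoord v.2 q.2 (norm_snd_le v) ((norm_snd_le q).trans (hs q hq))
  have := neg_abs_le (v.1 * q.1)
  have := neg_abs_le (v.2 * q.2)
  linarith

def cross (u v : ℝ × ℝ) : ℝ := u.1 * v.2 - u.2 * v.1

theorem Convex.mem_of_cross_nonneg {S : Set (ℝ × ℝ)} (hS : Convex ℝ S) (h0 : (0 : ℝ × ℝ) ∈ S)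
    {p q v : ℝ × ℝ} (hp : p ∈ S) (hq : q ∈ S) (hpq : 0 < cross p q)
    (hpv : 0 ≤ cross p v) (hvq : 0 ≤ cross v q) (hedge : cross p v + cross v q ≤ cross p q) :
    v ∈ S := by
  set b := cross v q / cross p q
  set c := cross p v / cross p q
  have hb : 0 ≤ b := div_nonneg hvq hpq.le
  have hc : 0 ≤ c := div_nonneg hpv hpq.le
  have hbc : 0 ≤ 1 - b - c := by
    rw [sub_sub, sub_nonneg, ← add_div, div_le_one hpq]; linarith
  -- Cramer's rule
  have hv : b • p + c • q = v := by
    ext <;> simp only [b, c, Prod.fst_add, Prod.snd_add, Prod.smul_fst, Prod.smul_snd,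
      smul_eq_mul] <;> field_simp <;> simp only [cross] <;> ring
  have := hS.sum_mem (t := Finset.univ) (w := ![b, c, 1 - b - c]) (z := ![p, q, 0])
    (by simp [Fin.forall_fin_succ, hb, hc, hbc])
    (by simp [Fin.sum_univ_three]) (by simp [Fin.forall_fin_succ, *])
  simpa [Fin.sum_univ_three, hv] using this

theorem sum_cross {ι : Type*} (s : Finset ι) (w : ι → ℝ) (p : ι → ℝ × ℝ) (v : ℝ × ℝ) :
    ∑ i ∈ s, w i * cross (p i) v = cross (∑ i ∈ s, w i • p i) v := by
  simp only [cross, Prod.fst_sum, Prod.snd_sum, Prod.smul_fst, Prod.smul_snd, smul_eq_mul,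
    Finset.sum_mul, mul_sub, Finset.sum_sub_distrib, mul_assoc]

open Fin.NatCast in
theorem exists_cross_nonneg_cross_succ_nonpos {n : ℕ} [NeZero n] {p : Fin n → ℝ × ℝ}
    {w : Fin n → ℝ} (hw : ∀ i, 0 < w i) (hwp : ∑ i, w i • p i = 0) (v : ℝ × ℝ) :
    ∃ i, 0 ≤ cross (p i) v ∧ cross (p (i + 1)) v ≤ 0 := by
  by_contra! h
  have hsum : ∑ i, w i * cross (p i) v = 0 := by rw [sum_cross, hwp]; simp [cross]
  by_cases! hneg : ∀ i, cross (p i) v < 0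
  · have := (Finset.sum_eq_zero_iff_of_nonpos fun i _ =>
      mul_nonpos_of_nonneg_of_nonpos (hw i).le (hneg i).le).mp hsum 0 (Finset.mem_univ _)
    exact (mul_neg_of_pos_of_neg (hw 0) (hneg 0)).ne this
  obtain ⟨j, hj⟩ := hneg
  have hstep : ∀ k : ℕ, 0 ≤ cross (p (j + (k : Fin n))) v := by
    intro k
    induction k with
    | zero => simpa using hj
    | succ k ih => simpa [add_assoc] using (h _ ih).le
  have hnonneg : ∀ i, 0 ≤ cross (p i) v := fun i => by
    simpa using hstep (i - j : Fin n)
  have := (Finset.sum_eq_zero_iff_of_nonneg fun i _ =>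
    mul_nonneg (hw i).le (hnonneg i)).mp hsum (j + 1) (Finset.mem_univ _)
  exact (mul_pos (hw _) (h j hj)).ne' this

theorem Convex.mem_of_forall_cross_le {n : ℕ} [NeZero n] {S : Set (ℝ × ℝ)} (hS : Convex ℝ S)
    {p : Fin n → ℝ × ℝ} (hp : ∀ i, p i ∈ S)
    (hccw : ∀ i, 0 < cross (p i) (p (i + 1))) {w : Fin n → ℝ} (hw : ∀ i, 0 < w i)
    (hwp : ∑ i, w i • p i = 0) {v : ℝ × ℝ}
    (hv : ∀ i, cross (p i) v + cross v (p (i + 1)) ≤ cross (p i) (p (i + 1))) : v ∈ S := by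
  have h0 : (0 : ℝ × ℝ) ∈ S := by
    have := hS.centerMass_mem (fun i _ => (hw i).le)
      (Finset.sum_pos (fun i _ => hw i) Finset.univ_nonempty) (fun i _ => hp i)
    rwa [Finset.centerMass, hwp, smul_zero] at this
  obtain ⟨i, hi, hi'⟩ := exists_cross_nonneg_cross_succ_nonpos hw hwp v
  refine hS.mem_of_cross_nonneg h0 (hp i) (hp (i + 1)) (hccw i) hi ?_ (hv i)
  simp only [cross] at hi' ⊢
  linarith

def pentagonVerts : Set (ℝ × ℝ) :=
  {((-1 : ℝ), (2 : ℝ)), ((1 : ℝ), (2 : ℝ)), ((1 : ℝ), (0 : ℝ)),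
    ((-1 : ℝ), (-1 : ℝ)), ((-2 : ℝ), (-1 : ℝ))}

def dualPentagonVerts : Set (ℝ × ℝ) :=
  {((3 / 5 : ℝ), (-1 / 5 : ℝ)), ((0 : ℝ), (1 : ℝ)), ((-1 : ℝ), (2 : ℝ)),
    ((-1 : ℝ), (0 : ℝ)), ((0 : ℝ), (-1 / 2 : ℝ))}

theorem mem_dualPoly_pentagon {v : ℝ × ℝ} :
    v ∈ dualPoly (convexHull ℝ pentagonVerts) ↔
      -1 ≤ -v.1 + 2 * v.2 ∧ -1 ≤ v.1 + 2 * v.2 ∧ -1 ≤ v.1 ∧ -1 ≤ -v.1 - v.2 ∧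
        -1 ≤ -2 * v.1 - v.2 := by
  rw [dualPoly_convexHull]
  simp only [dualPoly, pentagonVerts, Set.mem_ofPred_eq, Set.forall_mem_insert,
    Set.mem_singleton_iff, forall_eq]
  constructor <;> rintro ⟨h1, h2, h3, h4, h5⟩ <;> refine ⟨?_, ?_, ?_, ?_, ?_⟩ <;> linarith

theorem dualPoly_dualPentagonVerts_subset :
    dualPoly dualPentagonVerts ⊆ convexHull ℝ pentagonVerts := by
  intro v hv
  simp only [dualPoly, dualPentagonVerts, Set.mem_ofPred_eq, Set.forall_mem_insert,
    Set.mem_singleton_iff, forall_eq] at hv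
  obtain ⟨h1, h2, h3, h4, h5⟩ := hv
  refine (convex_convexHull ℝ _).mem_of_forall_cross_le (n := 5)
    (p := ![(1, 0), (1, 2), (-1, 2), (-2, -1), (-1, -1)]) (w := ![5, 1, 1, 1, 3])
    ?_ ?_ ?_ ?_ ?_
  · intro i; apply subset_convexHull; fin_cases i <;> simp [pentagonVerts]
  · simp [Fin.forall_fin_succ, cross]; norm_num
  · simp [Fin.forall_fin_succ]
  · simp [Fin.sum_univ_five]; norm_num
  · simp [Fin.forall_fin_succ, cross]
    refine ⟨?_, ?_, ?_, ?_, ?_⟩ <;> linarith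

theorem dualPoly_pentagon :
    dualPoly (convexHull ℝ pentagonVerts) = convexHull ℝ dualPentagonVerts := by
  refine subset_antisymm (fun v hv => ?_) (convexHull_min (fun q hq => ?_) (convex_dualPoly _))
  · obtain ⟨h1, h2, h3, h4, h5⟩ := mem_dualPoly_pentagon.mp hv
    refine (convex_convexHull ℝ _).mem_of_forall_cross_le (n := 5)
      (p := ![(3 / 5, -1 / 5), (0, 1), (-1, 2), (-1, 0), (0, -1 / 2)]) (w := ![10, 3, 3, 3, 14])
      ?_ ?_ ?_ ?_ ?_
    · intro i; apply subset_convexHull; fin_cases i <;> simp [dualPentagonVerts]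
    · simp [Fin.forall_fin_succ, cross]; norm_num
    · simp [Fin.forall_fin_succ]
    · simp [Fin.sum_univ_five]; norm_num
    · simp [Fin.forall_fin_succ, cross]
      refine ⟨?_, ?_, ?_, ?_, ?_⟩ <;> linarith
  · simp only [dualPentagonVerts, Set.mem_insert_iff, Set.mem_singleton_iff] at hq
    rcases hq with rfl | rfl | rfl | rfl | rfl <;> norm_num [mem_dualPoly_pentagon]

theorem zero_mem_interior_pentagon : (0 : ℝ × ℝ) ∈ interior (convexHull ℝ pentagonVerts) := by
  refine interior_mono dualPoly_dualPentagonVerts_subset (zero_mem_interior_dualPoly two_pos ?_)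
  simp only [dualPentagonVerts, Set.mem_insert_iff, Set.mem_singleton_iff]
  rintro q (rfl | rfl | rfl | rfl | rfl) <;> norm_num [Prod.norm_def]

theorem extremePoints_smul {𝕜 E : Type*} [Field 𝕜] [LinearOrder 𝕜] [IsStrictOrderedRing 𝕜]
    [AddCommGroup E] [Module 𝕜 E] {c : 𝕜} (hc : c ≠ 0) (s : Set E) :
    Set.extremePoints 𝕜 (c • s) = c • Set.extremePoints 𝕜 s := by
  simpa only [LinearEquiv.smulOfNeZero_apply, Set.image_smul] using
    (image_extremePoints (LinearEquiv.smulOfNeZero 𝕜 E c hc) s).symm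

theorem extremePoints_dualPoly_pentagon_subset :
    Set.extremePoints ℝ (dualPoly (convexHull ℝ pentagonVerts)) ⊆ dualPentagonVerts :=
  dualPoly_pentagon ▸ extremePoints_convexHull_subset

theorem mem_extremePoints_dualPoly_pentagon_bottom :
    ((0 : ℝ), (-1 / 2 : ℝ)) ∈ Set.extremePoints ℝ (dualPoly (convexHull ℝ pentagonVerts)) := by
  refine exposedPoints_subset_extremePoints
    ⟨by norm_num [mem_dualPoly_pentagon], -ContinuousLinearMap.snd ℝ ℝ ℝ, fun y hy => ?_⟩
  obtain ⟨h1, h2, -, -, -⟩ := mem_dualPoly_pentagon.mp hy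
  simp only [neg_apply, ContinuousLinearMap.coe_snd', neg_le_neg_iff]
  exact ⟨by linarith, fun h => Prod.ext (by linarith) (by linarith)⟩

theorem mem_extremePoints_dualPoly_pentagon_right :
    ((3 / 5 : ℝ), (-1 / 5 : ℝ)) ∈ Set.extremePoints ℝ (dualPoly (convexHull ℝ pentagonVerts)) := by
  refine exposedPoints_subset_extremePoints ⟨by norm_num [mem_dualPoly_pentagon],
    (3 : ℝ) • ContinuousLinearMap.fst ℝ ℝ ℝ - ContinuousLinearMap.snd ℝ ℝ ℝ, fun y hy => ?_⟩
  obtain ⟨h1, -, -, -, h5⟩ := mem_dualPoly_pentagon.mp hy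
  simp only [sub_apply, smul_apply, ContinuousLinearMap.coe_fst', ContinuousLinearMap.coe_snd',
    smul_eq_mul]
  exact ⟨by linarith, fun h => Prod.ext (by linarith) (by linarith)⟩

theorem ten_smul_dualPentagonVerts_subset_latticePts :
    (10 : ℝ) • dualPentagonVerts ⊆ latticePts := by
  rintro _ ⟨q, hq, rfl⟩
  simp only [dualPentagonVerts, Set.mem_insert_iff, Set.mem_singleton_iff] at hq
  rcases hq with rfl | rfl | rfl | rfl | rfl
  · exact ⟨(6, -2), by norm_num [i2r]⟩
  · exact ⟨(0, 10), by norm_num [i2r]⟩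
  · exact ⟨(-10, 20), by norm_num [i2r]⟩
  · exact ⟨(-10, 0), by norm_num [i2r]⟩
  · exact ⟨(0, -5), by norm_num [i2r]⟩

theorem Nat.dvd_of_intCast_mul_eq {a b : ℕ} {m : ℤ} (h : (m : ℝ) * a = b) : a ∣ b :=
  Int.natCast_dvd_natCast.mp ⟨m, by rw [mul_comm]; exact_mod_cast h.symm⟩

theorem ten_le_of_extremePoints_smul_subset_latticePts {ℓ : ℕ} (hℓ : 0 < ℓ)
    (h : Set.extremePoints ℝ ((ℓ : ℝ) • dualPoly (convexHull ℝ pentagonVerts)) ⊆ latticePts) :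
    10 ≤ ℓ := by
  rw [extremePoints_smul (by positivity)] at h
  obtain ⟨m, hm⟩ := h (Set.smul_mem_smul_set mem_extremePoints_dualPoly_pentagon_bottom)
  obtain ⟨k, hk⟩ := h (Set.smul_mem_smul_set mem_extremePoints_dualPoly_pentagon_right)
  simp only [i2r, Prod.smul_mk, smul_eq_mul, Prod.mk.injEq] at hm hk
  have h2 : 2 ∣ ℓ := Nat.dvd_of_intCast_mul_eq (m := -m.2) (by push_cast; linarith)
  have h5 : 5 ∣ 3 * ℓ := Nat.dvd_of_intCast_mul_eq (m := k.1) (by push_cast; linarith)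
  omega

theorem exists_primitive_of_mem_extremePoints_pentagon {p : ℝ × ℝ}
    (hp : p ∈ Set.extremePoints ℝ (convexHull ℝ pentagonVerts)) :
    ∃ v : ℤ × ℤ, Int.gcd v.1 v.2 = 1 ∧ p = i2r v := by
  have hp' : p ∈ pentagonVerts := extremePoints_convexHull_subset hp
  simp only [pentagonVerts, Set.mem_insert_iff, Set.mem_singleton_iff] at hp'
  rcases hp' with rfl | rfl | rfl | rfl | rfl
  · exact ⟨(-1, 2), by decide, by norm_num [i2r]⟩
  · exact ⟨(1, 2), by decide, by norm_num [i2r]⟩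
  · exact ⟨(1, 0), by decide, by norm_num [i2r]⟩
  · exact ⟨(-1, -1), by decide, by norm_num [i2r]⟩
  · exact ⟨(-2, -1), by decide, by norm_num [i2r]⟩

theorem extremePoints_ten_smul_dualPoly_pentagon_subset :
    Set.extremePoints ℝ ((10 : ℝ) • dualPoly (convexHull ℝ pentagonVerts)) ⊆ latticePts := by
  rw [extremePoints_smul (by norm_num)]
  exact (Set.smul_set_mono extremePoints_dualPoly_pentagon_subset).trans
    ten_smul_dualPentagonVerts_subset_latticePts

/-- The pentagon with vertices `(-1,2)`, `(1,2)`, `(1,0)`, `(-1,-1)`, `(-2,-1)` is an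
LDP-polygon of index `10`. -/
theorem stmt7 (P : Set (ℝ × ℝ))
    (hP : P = convexHull ℝ
      {((-1 : ℝ), (2 : ℝ)), ((1 : ℝ), (2 : ℝ)), ((1 : ℝ), (0 : ℝ)),
        ((-1 : ℝ), (-1 : ℝ)), ((-2 : ℝ), (-1 : ℝ))}) :
    (0 : ℝ × ℝ) ∈ interior P ∧
    (∀ p ∈ Set.extremePoints ℝ P, ∃ v : ℤ × ℤ, Int.gcd v.1 v.2 = 1 ∧ p = i2r v) ∧
    IsLeast {ℓ : ℕ | 0 < ℓ ∧ Set.extremePoints ℝ ((ℓ : ℝ) • dualPoly P) ⊆ latticePts}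
      10 := by
  change P = convexHull ℝ pentagonVerts at hP
  subst hP
  refine ⟨zero_mem_interior_pentagon, fun p hp => exists_primitive_of_mem_extremePoints_pentagon hp,
    ⟨by norm_num, ?_⟩, fun ℓ hℓ => ten_le_of_extremePoints_smul_subset_latticePts hℓ.1 hℓ.2⟩
  simpa only [Nat.cast_ofNat] using extremePoints_ten_smul_dualPoly_pentagon_subset
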